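/- In the monoid ℛ_n with generators s_1,...,s_{n-1} (the simple transpositions) and e_{k_1,...,k_{m-1}} (standard interval-partition idempotents), the relation e_{k_1,...,k_{m-1}} s_i = s_i e_{k_1,...,k_{m-1}} holds whenever i and i+1 lie in the same block {k_{j-1}+1,...,k_j} of the interval partition. -/

import Mathlib

/-- `l` is an ordered set partition of `{0,...,n-1}`: a list of pairwise disjoint
nonempty blocks whose union is everything. -/
def IsOSP (n : ℕ) (l : List (Finset (Fin n))) : Prop :=
  (∀ b ∈ l, b ≠ ∅) ∧ l.Pairwise Disjoint ∧ l.foldr (· ∪ ·) ∅ = Finset.univ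

/-- Intersection product of ordered set partitions: list the nonempty
intersections `p_i ∩ q_j`, ordered first by `j` then by `i`. -/
def ospMul (n : ℕ) (p q : List (Finset (Fin n))) : List (Finset (Fin n)) :=
  (q.flatMap (fun b => p.map (fun a => a ∩ b))).filter (fun a => a ≠ ∅)

/-- Blockwise application of a permutation to an ordered set partition. -/
def permAct (n : ℕ) (σ : Equiv.Perm (Fin n)) (p : List (Finset (Fin n))) :
    List (Finset (Fin n)) :=
  p.map (fun b => b.image σ)

/-- The PM-monoid product: `(σ,p)·(τ,q) = (στ, τ⁻¹(p) * q)`. -/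
def pmMul (n : ℕ) (x y : Equiv.Perm (Fin n) × List (Finset (Fin n))) :
    Equiv.Perm (Fin n) × List (Finset (Fin n)) :=
  (x.1 * y.1, ospMul n (permAct n y.1⁻¹ x.2) y.2)

/-- The identity element `(id, ({1,...,n}))` of the PM-monoid. -/
def pmId (n : ℕ) : Equiv.Perm (Fin n) × List (Finset (Fin n)) :=
  ((1 : Equiv.Perm (Fin n)), [(Finset.univ : Finset (Fin n))])

/-- `x* = (σ⁻¹, σ(p))`. -/
def pmStar (n : ℕ) (x : Equiv.Perm (Fin n) × List (Finset (Fin n))) :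
    Equiv.Perm (Fin n) × List (Finset (Fin n)) :=
  (x.1⁻¹, permAct n x.1 x.2)

/-- Stirling numbers of the second kind. -/
def stirling2 : ℕ → ℕ → ℕ
  | 0, 0 => 1
  | 0, _ + 1 => 0
  | _ + 1, 0 => 0
  | n + 1, m + 1 => (m + 1) * stirling2 n (m + 1) + stirling2 n m

/-- Interval ordered set partition: blocks are consecutive intervals in increasing order. -/
def IsIntervalOSP (n : ℕ) (l : List (Finset (Fin n))) : Prop :=
  IsOSP n l ∧ l.Pairwise (fun a b => ∀ x ∈ a, ∀ y ∈ b, x < y)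

/-! The transposition `swap i j` stabilises every block of a partition in which `i` and `j`
share a block: that block contains both points and the others contain neither. Multiplying
by the one-block partition `[univ]` only discards empty blocks, so both sides reduce to the
same pair. -/

theorem Finset.image_swap_eq_self {α : Type*} [DecidableEq α] {s : Finset α} {i j : α}
    (h : i ∈ s ↔ j ∈ s) : s.image (Equiv.swap i j) = s := by
  have swap_mem_iff (x : α) : Equiv.swap i j x ∈ s ↔ x ∈ s := by
    rw [Equiv.swap_apply_def]
    split_ifs with hxi hxj
    · rw [hxi, h]
    · rw [hxj, h]
    · rfl
  ext x
  exact ⟨fun hx => by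
    obtain ⟨y, hy, rfl⟩ := Finset.mem_image.mp hx
    exact (swap_mem_iff y).mpr hy,
    fun hx => Finset.mem_image.mpr ⟨_, (swap_mem_iff x).mpr hx, Equiv.swap_apply_self i j x⟩⟩

theorem List.Pairwise.eq_of_mem_of_mem {α : Type*} {l : List (Finset α)}
    (hl : l.Pairwise _root_.Disjoint) {b c : Finset α} (hb : b ∈ l) (hc : c ∈ l) {x : α}
    (hxb : x ∈ b) (hxc : x ∈ c) : b = c := by
  by_contra hbc
  exact Finset.disjoint_left.mp (hl.forall hb hc hbc) hxb hxc

theorem permAct_one (n : ℕ) (p : List (Finset (Fin n))) : permAct n 1 p = p := by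
  simp [permAct]

theorem permAct_swap_eq_self {n : ℕ} {p : List (Finset (Fin n))} (hp : p.Pairwise Disjoint)
    {b : Finset (Fin n)} (hb : b ∈ p) {i j : Fin n} (hi : i ∈ b) (hj : j ∈ b) :
    permAct n (Equiv.swap i j) p = p := by
  refine List.map_congr_left (fun c hc => Finset.image_swap_eq_self ?_) |>.trans (List.map_id p)
  exact ⟨fun hic => hp.eq_of_mem_of_mem hb hc hi hic ▸ hj,
    fun hjc => hp.eq_of_mem_of_mem hb hc hj hjc ▸ hi⟩

theorem ospMul_univ_right (n : ℕ) (p : List (Finset (Fin n))) :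
    ospMul n p [Finset.univ] = p.filter (· ≠ ∅) := by
  simp [ospMul]

theorem ospMul_univ_left (n : ℕ) (q : List (Finset (Fin n))) :
    ospMul n [Finset.univ] q = q.filter (· ≠ ∅) := by
  simp [ospMul]

theorem pmMul_one_comm_of_permAct_inv_eq {n : ℕ} {σ : Equiv.Perm (Fin n)}
    {p : List (Finset (Fin n))} (hσ : permAct n σ⁻¹ p = p) :
    pmMul n (1, p) (σ, [Finset.univ]) = pmMul n (σ, [Finset.univ]) (1, p) := by
  simp only [pmMul, one_mul, mul_one, inv_one, hσ, permAct_one, ospMul_univ_right,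
    ospMul_univ_left]

theorem stmt13_general (n : ℕ) (p : List (Finset (Fin n)))
    (hp : IsIntervalOSP n p) (i j : Fin n)
    (b : Finset (Fin n)) (hb : b ∈ p) (hi : i ∈ b) (hj : j ∈ b) :
    pmMul n ((1, p) : Equiv.Perm (Fin n) × List (Finset (Fin n)))
        (Equiv.swap i j, [Finset.univ]) =
      pmMul n (Equiv.swap i j, [Finset.univ]) (1, p) := by
  apply pmMul_one_comm_of_permAct_inv_eq
  rw [Equiv.swap_inv]
  exact permAct_swap_eq_self hp.1.2.1 hb hi hj

/-- `e_{k₁,...,k_{m-1}} s_i = s_i e_{k₁,...,k_{m-1}}` whenever `i` and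
`i+1` lie in the same block of the interval partition. -/
theorem stmt13 (n : ℕ) (hn : 1 ≤ n) (p : List (Finset (Fin n)))
    (hp : IsIntervalOSP n p) (i j : Fin n) (hij : (j : ℕ) = (i : ℕ) + 1)
    (b : Finset (Fin n)) (hb : b ∈ p) (hi : i ∈ b) (hj : j ∈ b) :
    pmMul n ((1, p) : Equiv.Perm (Fin n) × List (Finset (Fin n)))
        (Equiv.swap i j, [Finset.univ]) =
      pmMul n (Equiv.swap i j, [Finset.univ]) (1, p) :=
  stmt13_general n p hp i j b hb hi hj
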